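/- Fourier–Motzkin elimination step: let A₁, P₁, E₁, D₁, A₂, P₂, E₂, D₂ be real numbers. The projection onto (R₁, R₂) of the polytope of nonnegative (R₁ᶜ, R₂ᶜ, R₁ᵖ, R₂ᵖ) satisfying R₁ᶜ ≤ A₁, R₁ᵖ ≤ P₁, R₁ᵖ + R₂ᶜ ≤ E₁, R₁ᵖ + R₁ᶜ + R₂ᶜ ≤ D₁, R₂ᶜ ≤ A₂, R₂ᵖ ≤ P₂, R₂ᵖ + R₁ᶜ ≤ E₂, R₂ᵖ + R₁ᶜ + R₂ᶜ ≤ D₂ (with R₁ = R₁ᵖ + R₁ᶜ, R₂ = R₂ᵖ + R₂ᶜ) is contained in the set of (R₁, R₂) with R₁ ≤ A₁ + P₁, R₂ ≤ A₂ + P₂, R₁ + R₂ ≤ D₁ + P₂, R₁ + R₂ ≤ D₂ + P₁, R₁ + R₂ ≤ E₁ + E₂, 2R₁ + R₂ ≤ D₁ + P₁ + E₂, R₁ + 2R₂ ≤ D₂ + P₂ + E₁. -/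
import Mathlib


/-- Fourier–Motzkin elimination step for the partially-joint decoding region:
the projection onto `(R₁, R₂)` of region (34) is contained in the compact
Han–Kobayashi constraint set. -/
theorem fourier_motzkin_step
    (A1 A2 P1 P2 E1 E2 D1 D2 : ℝ)
    (R1c R2c R1p R2p : ℝ)
    (hR1c0 : 0 ≤ R1c) (hR2c0 : 0 ≤ R2c) (hR1p0 : 0 ≤ R1p) (hR2p0 : 0 ≤ R2p)
    (h1 : R1c ≤ A1) (h2 : R1p ≤ P1) (h3 : R1p + R2c ≤ E1)
    (h4 : R1p + R1c + R2c ≤ D1)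
    (h5 : R2c ≤ A2) (h6 : R2p ≤ P2) (h7 : R2p + R1c ≤ E2)
    (h8 : R2p + R1c + R2c ≤ D2)
    (R1 R2 : ℝ) (hR1 : R1 = R1p + R1c) (hR2 : R2 = R2p + R2c) :
    R1 ≤ A1 + P1 ∧ R2 ≤ A2 + P2 ∧
    R1 + R2 ≤ D1 + P2 ∧ R1 + R2 ≤ D2 + P1 ∧ R1 + R2 ≤ E1 + E2 ∧
    2 * R1 + R2 ≤ D1 + P1 + E2 ∧ R1 + 2 * R2 ≤ D2 + P2 + E1 := by
  subst hR1 hR2; refine ⟨by linarith, by linarith, by linarith, by linarith, by linarith, by linarith, by linarith⟩
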